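/- A simple deformation A + P of a square complex matrix A (where P has k entries that are independent parameters and the rest zero) is versal if and only if for every matrix M of the same size there exist a matrix R and a matrix P₀ obtained from P by substituting complex numbers for the parameters such that M + (AR − RA) = P₀; it is miniversal if and only if such P₀ (and the substituted values) is always unique. -/

import Mathlib

/-!
Let `T (R, α) = A R - R A + P α`. Differentiating the versality equation
`B (h E) * S E = S E * (A + E)` at `E = 0` shows that for any versal `B` the tangent space
`[A, gl]` and the range of `B'(0)` span all matrices. Conversely, if `T` is onto, a linear right
inverse `σ` of `T` parametrises candidate pairs `(S, α) = (1 + (σ Y).1, (σ Y).2)`, and the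
versality equation becomes an analytic equation `G (E, Y) = 0` whose `Y`-derivative at `0` is
`T ∘ σ = id`; the analytic implicit function theorem solves it.

Counting dimensions, every versal deformation has at least `codim [A, gl]` parameters, and a
linear deformation along a complement of `[A, gl]` attains this. So a versal `A + P` is
miniversal exactly when the range of `P` is a complement of `[A, gl]`, i.e. when the
decomposition `M + (A R - R A) = P₀` is unique.
-/

open Matrix

noncomputable instance {m n : ℕ} : NormedAddCommGroup (Matrix (Fin m) (Fin n) ℂ) :=
  Matrix.frobeniusNormedAddCommGroup

noncomputable instance {m n : ℕ} : NormedSpace ℂ (Matrix (Fin m) (Fin n) ℂ) :=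
  Matrix.frobeniusNormedSpace

/-- Versality of a deformation `𝒜` of `A`, with parameter space `ι → ℂ`. -/
def IsVersal {n : ℕ} {ι : Type} [Fintype ι] (A : Matrix (Fin n) (Fin n) ℂ)
    (𝒜 : (ι → ℂ) → Matrix (Fin n) (Fin n) ℂ) : Prop :=
  ∃ (S : Matrix (Fin n) (Fin n) ℂ → Matrix (Fin n) (Fin n) ℂ)
    (h : Matrix (Fin n) (Fin n) ℂ → (ι → ℂ)),
    AnalyticAt ℂ S 0 ∧ AnalyticAt ℂ h 0 ∧ S 0 = 1 ∧ h 0 = 0 ∧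
    ∀ᶠ E in nhds 0, 𝒜 (h E) * S E = S E * (A + E)

/-- The simple deformation of `A` whose independent parameters are located at the
positions in `Z` (all other entries of the perturbation being zero). -/
def simpleDeformation {n : ℕ} (A : Matrix (Fin n) (Fin n) ℂ)
    (Z : Finset (Fin n × Fin n)) (α : ↥Z → ℂ) : Matrix (Fin n) (Fin n) ℂ :=
  A + Matrix.of (fun i j => if h : (i, j) ∈ Z then α ⟨(i, j), h⟩ else 0)

attribute [local instance] Matrix.frobeniusNormedRing Matrix.frobeniusNormedAlgebra
attribute [local instance] LieRing.ofAssociativeRing LieAlgebra.ofAssociativeAlgebra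

open Filter Topology LinearMap LieAlgebra Module

section Implicit

variable {𝕜 E F : Type*} [NontriviallyNormedField 𝕜] [NormedAddCommGroup E] [NormedSpace 𝕜 E]
  [CompleteSpace E] [NormedAddCommGroup F] [NormedSpace 𝕜 F]

theorem AnalyticAt.exists_analyticAt_rightInverse {f : E → F} {f' : E ≃L[𝕜] F} {a : E}
    (hf : AnalyticAt 𝕜 f a) (hf' : HasFDerivAt f (f' : E →L[𝕜] F) a) :
    ∃ g : F → E, AnalyticAt 𝕜 g (f a) ∧ g (f a) = a ∧ ∀ᶠ y in 𝓝 (f a), f (g y) = y := by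
  have hs : HasStrictFDerivAt f (f' : E →L[𝕜] F) a := hf'.fderiv ▸ hf.hasStrictFDerivAt
  exact ⟨hs.localInverse f f' a,
    (hs.toOpenPartialHomeomorph f).analyticAt_symm' hs.mem_toOpenPartialHomeomorph_source hf
      hf'.fderiv,
    hs.localInverse_apply_image, hs.eventually_right_inverse⟩

theorem AnalyticAt.exists_analyticAt_implicit [CompleteSpace F] {G : E × F → F}
    {G' : E × F →L[𝕜] F}
    (hG : AnalyticAt 𝕜 G 0) (hG' : HasFDerivAt G G' 0) (hG'_inr : ∀ y, G' (0, y) = y)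
    (hG0 : G 0 = 0) :
    ∃ y : E → F, AnalyticAt 𝕜 y 0 ∧ y 0 = 0 ∧ ∀ᶠ e in 𝓝 0, G (e, y e) = 0 := by
  set H : E × F → E × F := fun p => (p.1, G p)
  have hH : HasFDerivAt H ((ContinuousLinearEquiv.refl 𝕜 E).skewProd
      (ContinuousLinearEquiv.refl 𝕜 F) (G'.comp (.inl 𝕜 E F)) : E × F →L[𝕜] E × F) 0 := by
    refine hasFDerivAt_fst.prodMk hG' |>.congr_fderiv ?_
    refine ContinuousLinearMap.ext fun p => Prod.ext rfl ?_
    change G' p = p.2 + G' (p.1, 0)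
    simpa [hG'_inr] using map_add G' (0, p.2) (p.1, 0)
  obtain ⟨g, hg, hg0, hgH⟩ :=
    AnalyticAt.exists_analyticAt_rightInverse (f := H) (analyticAt_fst.prod hG) hH
  have hH0 : H 0 = 0 := by simp [H, hG0]
  rw [hH0] at hg hg0 hgH
  have hinl : Tendsto (fun e : E => (e, (0 : F))) (𝓝 0) (𝓝 0) :=
    ((continuous_id.prodMk continuous_const).tendsto' 0 0 rfl)
  refine ⟨fun e => (g (e, 0)).2, ?_, by simp only [Prod.mk_zero_zero, hg0, Prod.snd_zero], ?_⟩
  · exact analyticAt_snd.comp (hg.comp₂ analyticAt_id analyticAt_const)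
  · filter_upwards [hinl.eventually hgH] with e he
    have hge : g (e, 0) = (e, (g (e, 0)).2) := Prod.ext (congrArg Prod.fst he :) rfl
    have hGg : G (g (e, 0)) = 0 := congrArg Prod.snd he
    rwa [hge] at hGg

end Implicit

theorem LinearMap.range_sup_eq_top_iff {R M N : Type*} [Ring R] [AddCommGroup M]
    [AddCommGroup N] [Module R M] [Module R N] (f : N →ₗ[R] M) (W : Submodule R M) :
    range f ⊔ W = ⊤ ↔ ∀ m, ∃ x, m + f x ∈ W := by
  refine ⟨fun h m => ?_, fun h => eq_top_iff.2 fun m _ => ?_⟩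
  · obtain ⟨_, ⟨x, rfl⟩, w, hw, hxw⟩ := Submodule.mem_sup.1 (h ▸ Submodule.mem_top : m ∈ _)
    refine ⟨-x, ?_⟩
    rwa [map_neg, ← hxw, add_neg_cancel_comm]
  · obtain ⟨x, hx⟩ := h m
    exact Submodule.mem_sup.2 ⟨f (-x), mem_range_self f _, _, hx, by simp⟩

theorem LinearMap.isCompl_range_iff {R M N : Type*} [Ring R] [AddCommGroup M]
    [AddCommGroup N] [Module R M] [Module R N] (f : N →ₗ[R] M) (W : Submodule R M) :
    IsCompl (range f) W ↔ ∀ m, ∃! w, w ∈ W ∧ ∃ x, m + f x = w := by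
  refine ⟨fun h m => ?_, fun h => ⟨?_, codisjoint_iff.2 ?_⟩⟩
  · obtain ⟨x, hx⟩ := (range_sup_eq_top_iff f W).1 h.sup_eq_top m
    refine ⟨_, ⟨hx, x, rfl⟩, fun w ⟨hw, y, hy⟩ => ?_⟩
    have hdiff : w - (m + f x) ∈ range f ⊓ W :=
      ⟨⟨y - x, by rw [← hy, map_sub]; abel⟩, W.sub_mem hw hx⟩
    rwa [h.inf_eq_bot, Submodule.mem_bot, sub_eq_zero] at hdiff
  · rw [Submodule.disjoint_def]
    rintro _ ⟨x, rfl⟩ hx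
    obtain ⟨w, -, hw⟩ := h 0
    exact (hw _ ⟨hx, x, zero_add _⟩).trans (hw 0 ⟨W.zero_mem, 0, by simp⟩).symm
  · exact (range_sup_eq_top_iff f W).2 fun m => by
      obtain ⟨w, ⟨hw, x, rfl⟩, -⟩ := h m
      exact ⟨x, hw⟩

section ParameterMatrix

variable {R m n : Type*} [CommSemiring R] [DecidableEq m] [DecidableEq n]

def parameterMatrix (Z : Finset (m × n)) : (Z → R) →ₗ[R] Matrix m n R where
  toFun α := Matrix.of fun i j => if h : (i, j) ∈ Z then α ⟨(i, j), h⟩ else 0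
  map_add' α β := by ext i j; by_cases h : (i, j) ∈ Z <;> simp [h]
  map_smul' c α := by ext i j; by_cases h : (i, j) ∈ Z <;> simp [h]

theorem parameterMatrix_injective (Z : Finset (m × n)) :
    Function.Injective (parameterMatrix (R := R) Z) := fun α β h => funext fun z => by
  simpa [parameterMatrix] using congr_fun₂ h z.1.1 z.1.2

theorem mem_range_parameterMatrix {Z : Finset (m × n)} {P : Matrix m n R} :
    P ∈ range (parameterMatrix Z) ↔ ∀ i j, P i j ≠ 0 → (i, j) ∈ Z := by
  refine ⟨?_, fun h => ⟨fun z => P z.1.1 z.1.2, ?_⟩⟩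
  · rintro ⟨α, rfl⟩ i j hij
    by_contra hZ
    simp [parameterMatrix, hZ] at hij
  · ext i j
    by_cases hZ : (i, j) ∈ Z
    · simp [parameterMatrix, hZ]
    · simpa [parameterMatrix, hZ, eq_comm] using mt (h i j) hZ

end ParameterMatrix

theorem simpleDeformation_eq_add {n : ℕ} (A : Matrix (Fin n) (Fin n) ℂ)
    (Z : Finset (Fin n × Fin n)) :
    simpleDeformation A Z = fun α => A + parameterMatrix Z α := rfl

section Versal
variable {n : ℕ} {ι : Type} [Fintype ι]

local notation "gl" => Matrix (Fin n) (Fin n) ℂ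

theorem isVersal_of_sup_eq_top (A : gl) (Q : (ι → ℂ) →ₗ[ℂ] gl)
    (hAQ : range (ad ℂ gl A) ⊔ range Q = ⊤) : IsVersal A (fun α => A + Q α) := by
  obtain ⟨σ, hσ⟩ := ((ad ℂ gl A).coprod Q).exists_rightInverse_of_surjective
    (by rw [range_coprod, hAQ])
  let u : gl →L[ℂ] gl := toContinuousLinearMap ((fst ℂ gl (ι → ℂ)).comp σ)
  let q : gl →L[ℂ] gl := toContinuousLinearMap (Q.comp ((snd ℂ gl (ι → ℂ)).comp σ))
  have huq : ∀ Y, A * u Y - u Y * A + q Y = Y := fun Y => by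
    simpa [Ring.lie_def, u, q] using LinearMap.congr_fun hσ Y
  let G : gl × gl → gl := fun p => (A + q p.2) * (1 + u p.2) - (1 + u p.2) * (A + p.1)
  have hU : HasFDerivAt (fun p : gl × gl => 1 + u p.2) (u.comp (.snd ℂ gl gl)) 0 :=
    (u.comp (.snd ℂ gl gl)).hasFDerivAt.const_add 1
  have hQ : HasFDerivAt (fun p : gl × gl => A + q p.2) (q.comp (.snd ℂ gl gl)) 0 :=
    (q.comp (.snd ℂ gl gl)).hasFDerivAt.const_add A
  have hE : HasFDerivAt (fun p : gl × gl => A + p.1) (.fst ℂ gl gl) 0 :=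
    hasFDerivAt_fst.const_add A
  have hG : AnalyticAt ℂ G 0 :=
    ((analyticAt_const.add ((q.comp (.snd ℂ gl gl)).analyticAt 0)).mul
      (analyticAt_const.add ((u.comp (.snd ℂ gl gl)).analyticAt 0))).sub
      ((analyticAt_const.add ((u.comp (.snd ℂ gl gl)).analyticAt 0)).mul
        (analyticAt_const.add analyticAt_fst))
  obtain ⟨Y, hY, hY0, hGY⟩ := hG.exists_analyticAt_implicit ((hQ.mul' hU).sub (hU.mul' hE))
    (fun v => by
      change (A + q 0) * u v + q v * (1 + u 0) - ((1 + u 0) * 0 + u v * (A + 0)) = v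
      simpa only [map_zero, add_zero, mul_one, mul_zero, zero_add, add_sub_right_comm]
        using huq v)
    (by simp [G])
  refine ⟨fun E => 1 + u (Y E), fun E => (σ (Y E)).2,
    analyticAt_const.add ((u.analyticAt _).comp hY),
    ((snd ℂ gl (ι → ℂ)).comp σ).toContinuousLinearMap.analyticAt _ |>.comp hY, by simp [hY0],
    by simp [hY0], ?_⟩
  filter_upwards [hGY] with E hGE
  exact sub_eq_zero.mp hGE

theorem sup_range_fderiv_eq_top_of_isVersal {A : gl} {B : (ι → ℂ) → gl}
    (hB : DifferentiableAt ℂ B 0) (hB0 : B 0 = A) (hv : IsVersal A B) :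
    range (ad ℂ gl A) ⊔ range (fderiv ℂ B 0 : (ι → ℂ) →ₗ[ℂ] gl) = ⊤ := by
  obtain ⟨S, h, hS, hh, hS0, hh0, hSh⟩ := hv
  set S' := fderiv ℂ S 0
  set h' := fderiv ℂ h 0
  set B' := fderiv ℂ B 0
  have hBh : HasFDerivAt (fun E => B (h E)) (B'.comp h') 0 :=
    (hh0 ▸ hB.hasFDerivAt : HasFDerivAt B B' (h 0)).comp 0 hh.differentiableAt.hasFDerivAt
  have hL := hBh.mul' hS.differentiableAt.hasFDerivAt
  have hR := hS.differentiableAt.hasFDerivAt.mul' ((hasFDerivAt_id (0 : gl)).const_add A)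
  have hLR := hL.unique (hR.congr_of_eventuallyEq hSh)
  refine eq_top_iff.2 fun M _ => Submodule.mem_sup.2
    ⟨ad ℂ gl A (S' M), mem_range_self _ _, B' (h' M), mem_range_self _ _, ?_⟩
  have hM : B (h 0) * S' M + B' (h' M) * S 0 = S 0 * M + S' M * (A + 0) := congr($hLR M)
  rw [hS0, hh0, hB0, mul_one, one_mul, add_zero] at hM
  rw [ad_apply, Ring.lie_def, sub_add_eq_add_sub, hM, add_sub_cancel_right]

theorem isVersal_iff_sup_eq_top (A : gl) (Q : (ι → ℂ) →ₗ[ℂ] gl) :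
    IsVersal A (fun α => A + Q α) ↔ range (ad ℂ gl A) ⊔ range Q = ⊤ := by
  refine ⟨fun hv => ?_, isVersal_of_sup_eq_top A Q⟩
  have hQ : HasFDerivAt (fun α => A + Q α) Q.toContinuousLinearMap 0 :=
    Q.toContinuousLinearMap.hasFDerivAt.const_add A
  simpa [hQ.fderiv] using
    sup_range_fderiv_eq_top_of_isVersal hQ.differentiableAt (by simp) hv

theorem finrank_le_finrank_range_ad_add_card {A : gl} {B : (ι → ℂ) → gl}
    (hB : DifferentiableAt ℂ B 0) (hB0 : B 0 = A) (hv : IsVersal A B) :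
    finrank ℂ gl ≤ finrank ℂ (range (ad ℂ gl A)) + Fintype.card ι := by
  have hsup := sup_range_fderiv_eq_top_of_isVersal hB hB0 hv
  calc finrank ℂ gl
        = finrank ℂ ↥(range (ad ℂ gl A) ⊔ range (fderiv ℂ B 0 : (ι → ℂ) →ₗ[ℂ] gl)) := by
        rw [hsup, finrank_top]
    _ ≤ finrank ℂ (range (ad ℂ gl A)) + finrank ℂ (range (fderiv ℂ B 0 : (ι → ℂ) →ₗ[ℂ] gl)) :=
        Submodule.finrank_add_le_finrank_add_finrank _ _
    _ ≤ finrank ℂ (range (ad ℂ gl A)) + Fintype.card ι := by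
        gcongr
        exact (finrank_range_le _).trans_eq (finrank_fintype_fun_eq_card ℂ)

theorem exists_isVersal_finrank_range_ad_add_eq (A : gl) :
    ∃ (k : ℕ) (Q : (Fin k → ℂ) →ₗ[ℂ] gl),
      IsVersal A (fun β => A + Q β) ∧ finrank ℂ (range (ad ℂ gl A)) + k = finrank ℂ gl := by
  obtain ⟨C, hC⟩ := Submodule.exists_isCompl (range (ad ℂ gl A))
  let Q : (Fin (finrank ℂ C) → ℂ) →ₗ[ℂ] gl :=
    C.subtype ∘ₗ (Module.finBasis ℂ C).equivFun.symm.toLinearMap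
  have hQ : range Q = C := by
    rw [range_comp_of_range_eq_top _ (LinearEquiv.range _), Submodule.range_subtype]
  exact ⟨_, Q, isVersal_of_sup_eq_top A Q (by rw [hQ]; exact hC.sup_eq_top),
    Submodule.finrank_add_eq_of_isCompl hC⟩

theorem isVersal_and_minimal_iff_isCompl (A : gl) (Q : (ι → ℂ) →ₗ[ℂ] gl)
    (hQ : Function.Injective Q) :
    (IsVersal A (fun α => A + Q α) ∧ ∀ (k : ℕ) (B : (Fin k → ℂ) → gl),
        AnalyticAt ℂ B 0 → B 0 = A → IsVersal A B → Fintype.card ι ≤ k) ↔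
      IsCompl (range (ad ℂ gl A)) (range Q) := by
  have hQrank : finrank ℂ (range Q) = Fintype.card ι := by
    rw [finrank_range_of_inj hQ, Module.finrank_fintype_fun_eq_card]
  rw [isVersal_iff_sup_eq_top]
  constructor
  · rintro ⟨hsup, hmin⟩
    obtain ⟨k, Q', hQ', hk⟩ := exists_isVersal_finrank_range_ad_add_eq A
    have hcard := hmin k (fun β => A + Q' β)
      (analyticAt_const.add (Q'.toContinuousLinearMap.analyticAt 0)) (by simp) hQ'
    have hinf := Submodule.finrank_sup_add_finrank_inf_eq (range (ad ℂ gl A)) (range Q)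
    rw [hsup, finrank_top] at hinf
    exact ⟨disjoint_iff.2 (Submodule.finrank_eq_zero.1 (by omega)), codisjoint_iff.2 hsup⟩
  · intro hcompl
    refine ⟨hcompl.sup_eq_top, fun k B hB hB0 hv => ?_⟩
    have := finrank_le_finrank_range_ad_add_card hB.differentiableAt hB0 hv
    have := Submodule.finrank_add_eq_of_isCompl hcompl
    simp only [Fintype.card_fin] at *
    omega

end Versal

/-- a simple deformation `A + P` is versal iff every `M` satisfies
`M + (AR − RA) = P₀` for some `R` and some specialization `P₀` of `P` (a matrix
supported on the parameter positions `Z`); it is miniversal iff such a specialization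
`P₀` is always unique. -/
theorem simple_versal_miniversal_criterion {n : ℕ} (A : Matrix (Fin n) (Fin n) ℂ)
    (Z : Finset (Fin n × Fin n)) :
    (IsVersal A (fun α : ↥Z → ℂ => simpleDeformation A Z α) ↔
      ∀ M : Matrix (Fin n) (Fin n) ℂ,
        ∃ R P₀ : Matrix (Fin n) (Fin n) ℂ,
          (∀ i j, P₀ i j ≠ 0 → (i, j) ∈ Z) ∧ M + (A * R - R * A) = P₀) ∧
    ((IsVersal A (fun α : ↥Z → ℂ => simpleDeformation A Z α) ∧
        ∀ (k : ℕ) (B : (Fin k → ℂ) → Matrix (Fin n) (Fin n) ℂ),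
          AnalyticAt ℂ B 0 → B 0 = A → IsVersal A B → Z.card ≤ k) ↔
      ∀ M : Matrix (Fin n) (Fin n) ℂ,
        ∃! P₀ : Matrix (Fin n) (Fin n) ℂ,
          (∀ i j, P₀ i j ≠ 0 → (i, j) ∈ Z) ∧
          ∃ R : Matrix (Fin n) (Fin n) ℂ, M + (A * R - R * A) = P₀) := by
  rw [simpleDeformation_eq_add, ← Fintype.card_coe Z,
    isVersal_and_minimal_iff_isCompl _ _ (parameterMatrix_injective Z), isVersal_iff_sup_eq_top,
    range_sup_eq_top_iff, isCompl_range_iff]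
  simp only [mem_range_parameterMatrix, ad_apply, Ring.lie_def, exists_eq_right', and_self]
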